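/- Let U = [[u, −t†], [t, u†]] be a unitary 2×2 matrix with u, t ∈ D[ω]. Then for every k ≥ 0, (√2)^k u ∈ Z[ω] if and only if (√2)^k t ∈ Z[ω]; in particular, u and t have the same least denominator exponent. -/

import Mathlib

/-!
Write `s ∈ ℤ[ω]` as `s = aω³ + bω² + cω + d`. Then
`s†s = (a² + b² + c² + d²) + (ab + bc + cd − da)√2`, and if this is divisible by `2` then
`a + c` and `b + d` are even, which is exactly what makes `s / √2` lie in `ℤ[ω]`.

If `√2ᵏu` and `√2ᵏ⁺¹t` lie in `ℤ[ω]`, unitarity gives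
`(√2ᵏ⁺¹t)†(√2ᵏ⁺¹t) = 2 (2ᵏ − (√2ᵏu)†(√2ᵏu))`, hence `√2ᵏt ∈ ℤ[ω]`. Descending from some
denominator exponent of `t`, which exists because `t ∈ D[ω]`, every denominator exponent of `u`
is one of `t`, and symmetrically.
-/

noncomputable def ω : ℂ := (1 + Complex.I) / (Real.sqrt 2 : ℂ)

noncomputable def zω (a b c d : ℤ) : ℂ := a * ω ^ 3 + b * ω ^ 2 + c * ω + d

/-- Membership in ℤ[ω]. -/
def inZω (t : ℂ) : Prop := ∃ a b c d : ℤ, t = zω a b c d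

/-- Membership in D[ω] = ℤ[1/√2, i]. -/
def inDω (t : ℂ) : Prop := ∃ k : ℕ, inZω ((Real.sqrt 2 : ℂ) ^ k * t)

open Complex ComplexConjugate

theorem int_add_int_mul_sqrt_two_eq_zero {m n : ℤ} (h : (m : ℝ) + n * √2 = 0) :
    m = 0 ∧ n = 0 := by
  obtain rfl : n = 0 := by
    by_contra hn
    exact ((irrational_sqrt_two.intCast_mul hn).intCast_add m).ne_zero h
  exact ⟨by simpa using h, rfl⟩

theorem ofReal_sqrt_two_sq : ((√2 : ℝ) : ℂ) ^ 2 = 2 := by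
  rw [← ofReal_pow, Real.sq_sqrt zero_le_two, ofReal_ofNat]

theorem ofReal_sqrt_two_ne_zero : ((√2 : ℝ) : ℂ) ≠ 0 := by simp

theorem ω_sq : ω ^ 2 = I := by
  rw [ω, div_pow, ofReal_sqrt_two_sq, div_eq_iff two_ne_zero]
  linear_combination I_sq

theorem ω_pow_four : ω ^ 4 = -1 := by
  rw [show 4 = 2 * 2 from rfl, pow_mul, ω_sq, I_sq]

theorem ω_eq_re_add_im_mul_I : ω = ((√2 / 2 : ℝ) : ℂ) + ((√2 / 2 : ℝ) : ℂ) * I := by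
  rw [ω, div_eq_iff ofReal_sqrt_two_ne_zero]
  push_cast
  linear_combination (-(1 + I) / 2) * ofReal_sqrt_two_sq

theorem conj_ω : conj ω = -ω ^ 3 := by
  rw [pow_succ, ω_sq, ω_eq_re_add_im_mul_I]
  simp only [map_add, map_mul, conj_ofReal, conj_I]
  push_cast
  linear_combination (((√2 : ℝ) : ℂ) / 2) * I_sq

theorem ofReal_sqrt_two_eq : ((√2 : ℝ) : ℂ) = ω - ω ^ 3 := by
  rw [pow_succ, ω_sq, ω_eq_re_add_im_mul_I]
  push_cast
  linear_combination (((√2 : ℝ) : ℂ) / 2) * I_sq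

theorem zω_eq_re_add_im_mul_I (a b c d : ℤ) :
    zω a b c d = ((d + (c - a) * (√2 / 2) : ℝ) : ℂ) + ((b + (a + c) * (√2 / 2) : ℝ) : ℂ) * I := by
  rw [zω, pow_succ, ω_sq, ω_eq_re_add_im_mul_I]
  push_cast
  linear_combination ((a : ℂ) * ((√2 : ℝ) : ℂ) / 2) * I_sq

theorem zω_eq_zero {a b c d : ℤ} (h : zω a b c d = 0) : a = 0 ∧ b = 0 ∧ c = 0 ∧ d = 0 := by
  rw [zω_eq_re_add_im_mul_I, Complex.ext_iff] at h
  simp only [add_re, add_im, mul_re, mul_im, ofReal_re, ofReal_im, I_re, I_im, zero_re,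
    zero_im] at h
  have hre := int_add_int_mul_sqrt_two_eq_zero (m := 2 * d) (n := c - a) (by push_cast; linarith)
  have him := int_add_int_mul_sqrt_two_eq_zero (m := 2 * b) (n := a + c) (by push_cast; linarith)
  omega

theorem zω_sub (a b c d a' b' c' d' : ℤ) :
    zω a b c d - zω a' b' c' d' = zω (a - a') (b - b') (c - c') (d - d') := by
  simp only [zω]; push_cast; ring

theorem zω_inj {a b c d a' b' c' d' : ℤ} :
    zω a b c d = zω a' b' c' d' ↔ a = a' ∧ b = b' ∧ c = c' ∧ d = d' := by
  refine ⟨fun h ↦ ?_, by rintro ⟨rfl, rfl, rfl, rfl⟩; rfl⟩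
  have := zω_eq_zero (a := a - a') (b := b - b') (c := c - c') (d := d - d')
    (by rw [← zω_sub, h, sub_self])
  omega

theorem zω_add (a b c d a' b' c' d' : ℤ) :
    zω a b c d + zω a' b' c' d' = zω (a + a') (b + b') (c + c') (d + d') := by
  simp only [zω]; push_cast; ring

theorem zω_neg (a b c d : ℤ) : -zω a b c d = zω (-a) (-b) (-c) (-d) := by
  simp only [zω]; push_cast; ring

theorem zω_mul (a b c d a' b' c' d' : ℤ) :
    zω a b c d * zω a' b' c' d' =
      zω (a * d' + b * c' + c * b' + d * a') (b * d' + c * c' + d * b' - a * a')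
        (c * d' + d * c' - a * b' - b * a') (d * d' - a * c' - b * b' - c * a') := by
  simp only [zω]
  push_cast
  linear_combination ((a : ℂ) * a' * ω ^ 2 + (a * b' + b * a') * ω + (a * c' + b * b' + c * a')) *
    ω_pow_four

theorem conj_zω (a b c d : ℤ) : conj (zω a b c d) = zω (-c) (-b) (-a) d := by
  simp only [zω, map_add, map_mul, map_pow, conj_ω, map_intCast]
  push_cast
  linear_combination (-(a : ℂ) * ω ^ 5 + a * ω + b * ω ^ 2) * ω_pow_four

theorem ofReal_sqrt_two_mul_zω (a b c d : ℤ) :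
    ((√2 : ℝ) : ℂ) * zω a b c d = zω (b - d) (a + c) (b + d) (c - a) := by
  rw [ofReal_sqrt_two_eq]
  simp only [zω]
  push_cast
  linear_combination ((a : ℂ) - a * ω ^ 2 - b * ω - c) * ω_pow_four

theorem conj_zω_mul_zω (a b c d : ℤ) :
    conj (zω a b c d) * zω a b c d =
      zω (-(a * b + b * c + c * d - d * a)) 0 (a * b + b * c + c * d - d * a)
        (a ^ 2 + b ^ 2 + c ^ 2 + d ^ 2) := by
  rw [conj_zω, zω_mul]
  congr 1 <;> ring

theorem two_dvd_add_of_two_dvd_sum_sq {a b c d : ℤ} (h₁ : 2 ∣ a ^ 2 + b ^ 2 + c ^ 2 + d ^ 2)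
    (h₂ : 2 ∣ a * b + b * c + c * d - d * a) : 2 ∣ a + c ∧ 2 ∣ b + d := by
  have key : ∀ x y z w : ZMod 2, x ^ 2 + y ^ 2 + z ^ 2 + w ^ 2 = 0 →
      x * y + y * z + z * w - w * x = 0 → x + z = 0 ∧ y + w = 0 := by decide
  have hdvd (n : ℤ) : 2 ∣ n ↔ (n : ZMod 2) = 0 := (ZMod.intCast_zmod_eq_zero_iff_dvd n 2).symm
  simp only [hdvd, Int.cast_add, Int.cast_sub, Int.cast_mul, Int.cast_pow] at h₁ h₂ ⊢
  exact key _ _ _ _ h₁ h₂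

def zωSubring : Subring ℂ where
  carrier := {z | inZω z}
  mul_mem' := by
    rintro _ _ ⟨a, b, c, d, rfl⟩ ⟨a', b', c', d', rfl⟩
    exact ⟨_, _, _, _, zω_mul ..⟩
  one_mem' := ⟨0, 0, 0, 1, by simp [zω]⟩
  add_mem' := by
    rintro _ _ ⟨a, b, c, d, rfl⟩ ⟨a', b', c', d', rfl⟩
    exact ⟨_, _, _, _, zω_add ..⟩
  zero_mem' := ⟨0, 0, 0, 0, by simp [zω]⟩
  neg_mem' := by
    rintro _ ⟨a, b, c, d, rfl⟩
    exact ⟨_, _, _, _, zω_neg ..⟩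

theorem ofReal_sqrt_two_mem_zωSubring : ((√2 : ℝ) : ℂ) ∈ zωSubring :=
  ⟨-1, 0, 1, 0, by rw [ofReal_sqrt_two_eq, zω]; push_cast; ring⟩

theorem conj_mem_zωSubring {z : ℂ} (hz : z ∈ zωSubring) : conj z ∈ zωSubring := by
  obtain ⟨a, b, c, d, rfl⟩ := hz
  exact ⟨_, _, _, _, conj_zω ..⟩

theorem div_sqrt_two_mem_zωSubring {s r : ℂ} (hs : s ∈ zωSubring) (hr : r ∈ zωSubring)
    (h : conj s * s = 2 * r) : s / ((√2 : ℝ) : ℂ) ∈ zωSubring := by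
  obtain ⟨a, b, c, d, rfl⟩ := hs
  obtain ⟨p, q, r, e, rfl⟩ := hr
  have hcoeff : zω (-(a * b + b * c + c * d - d * a)) 0 (a * b + b * c + c * d - d * a)
      (a ^ 2 + b ^ 2 + c ^ 2 + d ^ 2) = zω (2 * p) (2 * q) (2 * r) (2 * e) := by
    rw [← conj_zω_mul_zω, h]
    simp only [zω]; push_cast; ring
  obtain ⟨-, -, hr₂, he₂⟩ := zω_inj.mp hcoeff
  obtain ⟨⟨k, hk⟩, ⟨l, hl⟩⟩ := two_dvd_add_of_two_dvd_sum_sq ⟨e, he₂⟩ ⟨r, hr₂⟩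
  refine ⟨l - d, k, l, k - a, ?_⟩
  rw [div_eq_iff ofReal_sqrt_two_ne_zero, mul_comm, ofReal_sqrt_two_mul_zω]
  congr 1 <;> omega

theorem Matrix.star_mul_self_add_star_mul_self_of_mem_unitaryGroup {R : Type*} [CommRing R]
    [StarRing R] {a b c d : R}
    (h : Matrix.of ![![a, b], ![c, d]] ∈ Matrix.unitaryGroup (Fin 2) R) :
    star a * a + star c * c = 1 := by
  simpa [Matrix.mul_apply, Fin.sum_univ_two] using
    congrFun (congrFun (Matrix.mem_unitaryGroup_iff'.mp h) 0) 0

theorem sqrt_two_pow_mul_mem_zωSubring_of_le {z : ℂ} {m n : ℕ} (hmn : m ≤ n)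
    (hz : ((√2 : ℝ) : ℂ) ^ m * z ∈ zωSubring) : ((√2 : ℝ) : ℂ) ^ n * z ∈ zωSubring := by
  rw [← Nat.sub_add_cancel hmn, pow_add, mul_assoc]
  exact mul_mem (pow_mem ofReal_sqrt_two_mem_zωSubring _) hz

section Descent

variable {x y : ℂ}

theorem sqrt_two_pow_mul_mem_zωSubring_of_succ (hxy : conj x * x + conj y * y = 1) {k : ℕ}
    (hx : ((√2 : ℝ) : ℂ) ^ k * x ∈ zωSubring) (hy : ((√2 : ℝ) : ℂ) ^ (k + 1) * y ∈ zωSubring) :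
    ((√2 : ℝ) : ℂ) ^ k * y ∈ zωSubring := by
  have hpow : ((√2 : ℝ) : ℂ) ^ k * ((√2 : ℝ) : ℂ) ^ k = 2 ^ k := by
    rw [← mul_pow, ← sq, ofReal_sqrt_two_sq]
  have hnorm : conj (((√2 : ℝ) : ℂ) ^ (k + 1) * y) * (((√2 : ℝ) : ℂ) ^ (k + 1) * y) =
      2 * (2 ^ k - conj (((√2 : ℝ) : ℂ) ^ k * x) * (((√2 : ℝ) : ℂ) ^ k * x)) := by
    simp only [map_mul, map_pow, conj_ofReal]
    linear_combination (((√2 : ℝ) : ℂ) ^ k * ((√2 : ℝ) : ℂ) ^ k * conj y * y) * ofReal_sqrt_two_sq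
      + (2 * conj y * y + 2 * conj x * x) * hpow + 2 ^ (k + 1) * hxy
  have hrest :
      (2 : ℂ) ^ k - conj (((√2 : ℝ) : ℂ) ^ k * x) * (((√2 : ℝ) : ℂ) ^ k * x) ∈ zωSubring :=
    sub_mem (pow_mem (ofNat_mem zωSubring 2) k) (mul_mem (conj_mem_zωSubring hx) hx)
  have := div_sqrt_two_mem_zωSubring hy hrest hnorm
  rwa [pow_succ', mul_assoc, mul_div_cancel_left₀ _ ofReal_sqrt_two_ne_zero] at this

theorem sqrt_two_pow_mul_mem_zωSubring_of_add (hxy : conj x * x + conj y * y = 1) {k : ℕ}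
    (hx : ((√2 : ℝ) : ℂ) ^ k * x ∈ zωSubring) (j : ℕ)
    (hy : ((√2 : ℝ) : ℂ) ^ (k + j) * y ∈ zωSubring) :
    ((√2 : ℝ) : ℂ) ^ k * y ∈ zωSubring := by
  induction j with
  | zero => exact hy
  | succ j ih =>
    exact ih (sqrt_two_pow_mul_mem_zωSubring_of_succ hxy
      (sqrt_two_pow_mul_mem_zωSubring_of_le (k.le_add_right j) hx) hy)

theorem sqrt_two_pow_mul_mem_zωSubring_of_inDω (hxy : conj x * x + conj y * y = 1)
    (hy : inDω y) {k : ℕ} (hx : ((√2 : ℝ) : ℂ) ^ k * x ∈ zωSubring) :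
    ((√2 : ℝ) : ℂ) ^ k * y ∈ zωSubring := by
  obtain ⟨m, hm⟩ := hy
  rcases le_total m k with hmk | hkm
  · exact sqrt_two_pow_mul_mem_zωSubring_of_le hmk hm
  · obtain ⟨j, rfl⟩ := Nat.exists_eq_add_of_le hkm
    exact sqrt_two_pow_mul_mem_zωSubring_of_add hxy hx j hm

end Descent

/-- If U = [[u, −t†],[t, u†]] is unitary with u, t ∈ D[ω], then u and t have exactly the
    same denominator exponents; in particular the same least denominator exponent. -/
theorem same_denominator_exponents (u t : ℂ) (hu : inDω u) (ht : inDω t)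
    (hU : (Matrix.of ![![u, -(starRingEnd ℂ) t], ![t, (starRingEnd ℂ) u]]) ∈
      Matrix.unitaryGroup (Fin 2) ℂ) :
    ∀ k : ℕ, (inZω ((Real.sqrt 2 : ℂ) ^ k * u) ↔ inZω ((Real.sqrt 2 : ℂ) ^ k * t)) := by
  have hut : conj u * u + conj t * t = 1 :=
    Matrix.star_mul_self_add_star_mul_self_of_mem_unitaryGroup hU
  intro k
  exact ⟨sqrt_two_pow_mul_mem_zωSubring_of_inDω hut ht,
    sqrt_two_pow_mul_mem_zωSubring_of_inDω ((add_comm _ _).trans hut) hu⟩
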